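/- For all n > m ≥ 0 and 0 ≤ t ≤ n, the quantities d^t_{n,m} := |{ x ∈ A_n \ A_{n-1} : x ⊆ A_m and |x| ≤ t }| satisfy d^t_{n,m} = d^t_{n,m-1} + Σ_{k=1}^{n-m-1} d^{t-k}_{n-k,m-1} · C(b_{m,m-1}, k) + C(b_{m,m-1}, n−m) · Σ_{k=0}^{m} d^{t-n+m}_{k,k-1}, with d^t_{0,-1} = 1 and d^t_{n,-1} = 0 for n ≥ 1, t ≥ 0. -/

import Mathlib

open ZFSet Finset

noncomputable section

abbrev HFSet := ZFSet.{0}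

/-- The adjunctive hierarchy of hereditarily finite sets. -/
def A : ℕ → Set HFSet
  | 0 => {∅}
  | n + 1 => {∅} ∪ {z | ∃ x ∈ A n, ∃ y ∈ A n, z = insert y x}

/-- Integer-indexed version, with `A n = ∅` for `n < 0`. -/
def Az (n : ℤ) : Set HFSet := if 0 ≤ n then A n.toNat else ∅

/-- The cumulative hierarchy (von Neumann) of hereditarily finite sets. -/
def W : ℕ → HFSet
  | 0 => ∅
  | n + 1 => ZFSet.powerset (W n)

/-- A ZF set is hereditarily finite if it lies in some finite level of the
cumulative hierarchy. -/
def IsHF (x : HFSet) : Prop := ∃ n, x ∈ W n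

/-- The adjunctive rank. -/
def ark (x : HFSet) : ℕ := sInf {n | x ∈ A n}

/-- The (von Neumann) rank of a hereditarily finite set. -/
def rk (x : HFSet) : ℕ := sInf {n | x ∈ W (n + 1)}

/-- `B n m` = sets in `A n \ A (n-1)` all of whose elements lie in `A m`. -/
def B (n m : ℤ) : Set HFSet :=
  {x | x ∈ Az n ∧ x ∉ Az (n - 1) ∧ ∀ y, y ∈ x → y ∈ Az m}

def b (n m : ℤ) : ℕ := (B n m).ncard

def a (n : ℕ) : ℕ := (A n).ncard

def c (n : ℕ) : ℕ := (Az n \ Az ((n : ℤ) - 1)).ncard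

/-- `d t n m` counts sets in `A n \ A (n-1)` included in `A m` of cardinality at most `t`. -/
noncomputable def d (t n m : ℤ) : ℕ :=
  {x : HFSet | x ∈ Az n ∧ x ∉ Az (n - 1) ∧ (∀ y, y ∈ x → y ∈ Az m) ∧
    (x.toSet.ncard : ℤ) ≤ t}.ncard

namespace S15

attribute [local instance] Classical.propDecidable

lemma mem_toSet' (x z : HFSet) : z ∈ x.toSet ↔ z ∈ x := Iff.rfl

lemma toSet_empty' : (∅ : HFSet).toSet = ∅ := by
  ext z; simp [mem_toSet', ZFSet.notMem_empty]

lemma toSet_insert' (x y : HFSet) : (insert y x).toSet = insert y x.toSet := by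
  ext z; simp [mem_toSet', ZFSet.mem_insert_iff]




lemma empty_mem_A (n : ℕ) : (∅ : HFSet) ∈ A n := by
  cases n with
  | zero => simp [A]
  | succ n => left; rfl

lemma mem_A_succ_iff {x : HFSet} {n : ℕ} :
    x ∈ A (n+1) ↔ x = ∅ ∨ ∃ x₀ ∈ A n, ∃ y ∈ A n, x = insert y x₀ := by
  constructor
  · rintro (h | h)
    · exact Or.inl h
    · exact Or.inr h
  · rintro (h | h)
    · exact h ▸ empty_mem_A _
    · exact Or.inr h

lemma insert_mem_A {x y : HFSet} {n : ℕ} (hx : x ∈ A n) (hy : y ∈ A n) :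
    insert y x ∈ A (n+1) :=
  mem_A_succ_iff.2 (Or.inr ⟨x, hx, y, hy, rfl⟩)

lemma A_mono_succ (n : ℕ) : A n ⊆ A (n+1) := by
  induction n with
  | zero => intro x hx; simp only [A, Set.mem_singleton_iff] at hx; exact hx ▸ empty_mem_A 1
  | succ n ih =>
      intro x hx
      rcases mem_A_succ_iff.1 hx with h | ⟨x₀, hx₀, y, hy, rfl⟩
      · exact h ▸ empty_mem_A _
      · exact insert_mem_A (ih hx₀) (ih hy)

lemma A_mono : Monotone A :=
  monotone_nat_of_le_succ A_mono_succ

lemma mem_of_mem_A_succ : ∀ {n : ℕ} {x y : HFSet}, x ∈ A (n+1) → y ∈ x → y ∈ A n := by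
  intro n
  induction n with
  | zero =>
      intro x y hx hy
      rcases mem_A_succ_iff.1 hx with rfl | ⟨x₀, hx₀, z, hz, rfl⟩
      · exact absurd hy (ZFSet.notMem_empty y)
      · simp only [A, Set.mem_singleton_iff] at hx₀ hz
        subst hx₀; subst hz
        rcases ZFSet.mem_insert_iff.1 hy with rfl | h
        · rfl
        · exact absurd h (ZFSet.notMem_empty y)
  | succ n ih =>
      intro x y hx hy
      rcases mem_A_succ_iff.1 hx with rfl | ⟨x₀, hx₀, z, hz, rfl⟩
      · exact absurd hy (ZFSet.notMem_empty y)
      · rcases ZFSet.mem_insert_iff.1 hy with rfl | h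
        · exact hz
        · exact A_mono_succ n (ih hx₀ h)

lemma toSet_finite_of_mem_A : ∀ {n : ℕ} {x : HFSet}, x ∈ A n → x.toSet.Finite := by
  intro n
  induction n with
  | zero =>
      intro x hx; simp only [A, Set.mem_singleton_iff] at hx; subst hx
      simp [toSet_empty']
  | succ n ih =>
      intro x hx
      rcases mem_A_succ_iff.1 hx with rfl | ⟨x₀, hx₀, y, hy, rfl⟩
      · simp [toSet_empty']
      · rw [toSet_insert']; exact (ih hx₀).insert y

lemma A_finite (n : ℕ) : (A n).Finite := by
  induction n with
  | zero => simp [A]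
  | succ n ih =>
      have : A (n+1) ⊆ {∅} ∪ Set.image2 (fun y x => insert y x) (A n) (A n) := by
        intro x hx
        rcases mem_A_succ_iff.1 hx with rfl | ⟨x₀, hx₀, y, hy, rfl⟩
        · exact Or.inl rfl
        · exact Or.inr ⟨y, hy, x₀, hx₀, rfl⟩
      exact Set.Finite.subset ((Set.finite_singleton _).union (ih.image2 _ ih)) this

lemma ark_le {x : HFSet} {n : ℕ} (h : x ∈ A n) : ark x ≤ n := Nat.sInf_le h

lemma mem_A_ark {x : HFSet} (h : ∃ n, x ∈ A n) : x ∈ A (ark x) := Nat.sInf_mem h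

lemma mem_A_of_ark_le {x : HFSet} {n : ℕ} (h : ∃ m, x ∈ A m) (hle : ark x ≤ n) :
    x ∈ A n := A_mono hle (mem_A_ark h)

lemma ark_empty : ark (∅ : HFSet) = 0 := Nat.eq_zero_of_le_zero (ark_le (empty_mem_A 0))




/-! ### ofFinset -/

instance : LeftCommutative (fun (y x : HFSet) => insert y x) :=
  ⟨fun a b x => by
    apply ZFSet.ext; intro z
    simp only [ZFSet.mem_insert_iff]
    tauto⟩

def ofFinset (s : Finset HFSet) : HFSet :=
  Multiset.foldr (fun (y x : HFSet) => insert y x) ∅ s.val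

@[simp] lemma mem_ofFinset {s : Finset HFSet} {z : HFSet} : z ∈ ofFinset s ↔ z ∈ s := by
  rcases s with ⟨m, hm⟩
  show z ∈ Multiset.foldr _ _ m ↔ z ∈ m
  clear hm
  induction m using Multiset.induction_on with
  | empty => simp [ZFSet.notMem_empty]
  | cons a m ih => simp [Multiset.foldr_cons, ZFSet.mem_insert_iff, ih]

lemma ofFinset_toFinset {x : HFSet} (h : x.toSet.Finite) : ofFinset h.toFinset = x := by
  apply ZFSet.ext
  intro z
  simp [Set.Finite.mem_toFinset, mem_toSet']

lemma toFinset_ofFinset {s : Finset HFSet} (h : (ofFinset s).toSet.Finite) :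
    h.toFinset = s := by
  ext z
  simp [Set.Finite.mem_toFinset, mem_toSet']

lemma ofFinset_finite (s : Finset HFSet) : (ofFinset s).toSet.Finite := by
  have : (ofFinset s).toSet = ↑s := by ext z; simp [mem_toSet']
  rw [this]; exact s.finite_toSet

lemma ofFinset_injective : Function.Injective ofFinset := by
  intro s t h
  ext z
  rw [← mem_ofFinset (s := s), ← mem_ofFinset (s := t), h]

/-! ### The rank function FF -/

def FF (s : Finset HFSet) : ℕ :=
  s.sup (fun y => ark y + (s.filter (fun z => ark y ≤ ark z)).card)

lemma FF_empty : FF ∅ = 0 := rfl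

lemma term_le_FF {s : Finset HFSet} {y : HFSet} (hy : y ∈ s) :
    ark y + (s.filter (fun z => ark y ≤ ark z)).card ≤ FF s := by
  unfold FF
  exact Finset.le_sup (f := fun y => ark y + (s.filter (fun z => ark y ≤ ark z)).card) hy

lemma FF_pos_of_mem {s : Finset HFSet} {y : HFSet} (hy : y ∈ s) :
    ark y + 1 ≤ FF s := by
  refine le_trans ?_ (term_le_FF hy)
  have : y ∈ s.filter (fun z => ark y ≤ ark z) := Finset.mem_filter.2 ⟨hy, le_refl _⟩
  exact Nat.add_le_add_left (Finset.card_pos.2 ⟨y, this⟩) _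

lemma FF_eq_zero_iff {s : Finset HFSet} : FF s = 0 ↔ s = ∅ := by
  constructor
  · intro h
    rcases s.eq_empty_or_nonempty with rfl | ⟨y, hy⟩
    · rfl
    · exact absurd (h ▸ FF_pos_of_mem hy) (by omega)
  · rintro rfl; rfl

lemma FF_insert_le {s : Finset HFSet} {y : HFSet} {n : ℕ}
    (h1 : FF s ≤ n) (h2 : ark y ≤ n) : FF (insert y s) ≤ n + 1 := by
  by_cases hys : y ∈ s
  · rw [Finset.insert_eq_self.2 hys]; omega
  apply Finset.sup_le
  intro z hz
  rcases Finset.mem_insert.1 hz with rfl | hzs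
  · -- z = y
    have hfil : (insert z s).filter (fun w => ark z ≤ ark w)
        = insert z (s.filter (fun w => ark z ≤ ark w)) := by
      rw [Finset.filter_insert, if_pos (le_refl _)]
    rw [hfil, Finset.card_insert_of_notMem (fun h => hys (Finset.mem_filter.1 h).1)]
    set c₀ := (s.filter (fun w => ark z ≤ ark w)).card with hc₀
    rcases Nat.eq_zero_or_pos c₀ with h0 | hpos
    · omega
    · obtain ⟨w, hw, hwmin⟩ := Finset.exists_min_image (s.filter (fun w => ark z ≤ ark w))
        ark (Finset.card_pos.1 hpos)
      have hw' := Finset.mem_filter.1 hw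
      have hsub : s.filter (fun w' => ark z ≤ ark w') ⊆ s.filter (fun w' => ark w ≤ ark w') := by
        intro w' hw'
        exact Finset.mem_filter.2 ⟨(Finset.mem_filter.1 hw').1, hwmin w' hw'⟩
      have hcard : c₀ ≤ (s.filter (fun w' => ark w ≤ ark w')).card := Finset.card_le_card hsub
      have := term_le_FF hw'.1 (s := s)
      have hzw : ark z ≤ ark w := hw'.2
      omega
  · -- z ∈ s
    have hsub : (insert y s).filter (fun w => ark z ≤ ark w)
        ⊆ insert y (s.filter (fun w => ark z ≤ ark w)) := by
      intro w hw
      rcases Finset.mem_insert.1 (Finset.mem_filter.1 hw).1 with rfl | hws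
      · exact Finset.mem_insert_self _ _
      · exact Finset.mem_insert_of_mem (Finset.mem_filter.2 ⟨hws, (Finset.mem_filter.1 hw).2⟩)
    have hcard := Finset.card_le_card hsub
    have hcard2 := Finset.card_insert_le y (s.filter (fun w => ark z ≤ ark w))
    have := term_le_FF hzs
    omega

/-! ### The rank formula -/

lemma FF_le_of_mem_A : ∀ {n : ℕ} {x : HFSet} (hx : x ∈ A n),
    FF (toSet_finite_of_mem_A hx).toFinset ≤ n := by
  intro n
  induction n with
  | zero =>
      intro x hx
      simp only [A, Set.mem_singleton_iff] at hx
      subst hx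
      have : (toSet_finite_of_mem_A (empty_mem_A 0)).toFinset = (∅ : Finset HFSet) := by
        ext z; simp [Set.Finite.mem_toFinset, mem_toSet']
      rw [this]; exact le_refl 0
  | succ n ih =>
      intro x hx
      rcases mem_A_succ_iff.1 hx with rfl | ⟨x₀, hx₀, y, hy, rfl⟩
      · have : (toSet_finite_of_mem_A hx).toFinset = (∅ : Finset HFSet) := by
          ext z; simp [Set.Finite.mem_toFinset, mem_toSet']
        rw [this, FF_empty]; omega
      · have hins : (toSet_finite_of_mem_A hx).toFinset
            = insert y (toSet_finite_of_mem_A hx₀).toFinset := by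
          ext z; simp [Set.Finite.mem_toFinset, mem_toSet', ZFSet.mem_insert_iff]
        rw [hins]
        exact FF_insert_le (ih hx₀) (ark_le hy)

lemma mem_A_of_FF_le : ∀ {n : ℕ} {s : Finset HFSet},
    (∀ y ∈ s, ∃ m, y ∈ A m) → FF s ≤ n → ofFinset s ∈ A n := by
  intro n
  induction n with
  | zero =>
      intro s hs h
      have : s = ∅ := FF_eq_zero_iff.1 (Nat.eq_zero_of_le_zero h)
      subst this
      have : ofFinset (∅ : Finset HFSet) = ∅ := by
        apply ZFSet.ext; intro z; simp [ZFSet.notMem_empty]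
      rw [this]; exact empty_mem_A 0
  | succ n ih =>
      intro s hs h
      rcases s.eq_empty_or_nonempty with rfl | hne
      · have : ofFinset (∅ : Finset HFSet) = ∅ := by
          apply ZFSet.ext; intro z; simp [ZFSet.notMem_empty]
        rw [this]; exact empty_mem_A _
      obtain ⟨y, hy, hymax⟩ := Finset.exists_max_image s ark hne
      have harky : ark y ≤ n := by have := FF_pos_of_mem hy; omega
      have hFF₀ : FF (s.erase y) ≤ n := by
        apply Finset.sup_le
        intro z hz
        have hzs : z ∈ s := Finset.mem_of_mem_erase hz
        have hsub : insert y ((s.erase y).filter (fun w => ark z ≤ ark w))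
            ⊆ s.filter (fun w => ark z ≤ ark w) := by
          intro w hw
          rcases Finset.mem_insert.1 hw with rfl | hw'
          · exact Finset.mem_filter.2 ⟨hy, hymax z hzs⟩
          · have := Finset.mem_filter.1 hw'
            exact Finset.mem_filter.2 ⟨Finset.mem_of_mem_erase this.1, this.2⟩
        have hcard := Finset.card_le_card hsub
        rw [Finset.card_insert_of_notMem
          (fun h => (Finset.notMem_erase y s) (Finset.mem_filter.1 h).1)] at hcard
        have := term_le_FF hzs
        omega
      have hyA : y ∈ A n := mem_A_of_ark_le (hs y hy) harky
      have h₀ : ofFinset (s.erase y) ∈ A n :=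
        ih (fun z hz => hs z (Finset.mem_of_mem_erase hz)) hFF₀
      have : ofFinset s = insert y (ofFinset (s.erase y)) := by
        apply ZFSet.ext; intro z
        simp only [mem_ofFinset, ZFSet.mem_insert_iff, mem_ofFinset, Finset.mem_erase]
        constructor
        · intro hz; by_cases hzy : z = y
          · exact Or.inl hzy
          · exact Or.inr ⟨hzy, hz⟩
        · rintro (rfl | ⟨_, hz⟩); exacts [hy, hz]
      rw [this]
      exact insert_mem_A h₀ hyA

lemma mem_A_iff_FF {s : Finset HFSet} (hs : ∀ y ∈ s, ∃ m, y ∈ A m) (n : ℕ) :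
    ofFinset s ∈ A n ↔ FF s ≤ n := by
  constructor
  · intro h
    have := FF_le_of_mem_A h
    rwa [toFinset_ofFinset] at this
  · exact mem_A_of_FF_le hs





/-! ### FF on unions -/

lemma FF_union {s e : Finset HFSet} {m : ℕ}
    (hs : ∀ y ∈ s, ark y < m) (he : ∀ y ∈ e, ark y = m) (hne : e.Nonempty) :
    FF (s ∪ e) = max (m + e.card) (FF s + e.card) := by
  have hdis : Disjoint s e := by
    rw [Finset.disjoint_left]
    intro y hys hye
    exact absurd (he y hye) (Nat.ne_of_lt (hs y hys))
  set g : HFSet → ℕ := fun y => ark y + ((s ∪ e).filter (fun z => ark y ≤ ark z)).card with hg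
  have hsup : FF (s ∪ e) = max (s.sup g) (e.sup g) := by
    unfold FF
    rw [Finset.sup_union]
  have heg : ∀ y ∈ e, g y = m + e.card := by
    intro y hy
    have : (s ∪ e).filter (fun z => ark y ≤ ark z) = e := by
      rw [Finset.filter_union]
      have h1 : s.filter (fun z => ark y ≤ ark z) = ∅ := by
        apply Finset.filter_eq_empty_iff.2
        intro z hz
        rw [he y hy]
        exact Nat.not_le.2 (hs z hz)
      have h2 : e.filter (fun z => ark y ≤ ark z) = e := by
        apply Finset.filter_eq_self.2
        intro z hz
        rw [he y hy, he z hz]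
      rw [h1, h2, Finset.empty_union]
    simp only [hg]
    rw [this, he y hy]
  have hesup : e.sup g = m + e.card := by
    apply le_antisymm
    · exact Finset.sup_le (fun y hy => (heg y hy).le)
    · obtain ⟨y, hy⟩ := hne
      calc m + e.card = g y := (heg y hy).symm
        _ ≤ e.sup g := Finset.le_sup hy
  have hsg : ∀ z ∈ s, g z = (ark z + (s.filter (fun w => ark z ≤ ark w)).card) + e.card := by
    intro z hz
    have hfe : e.filter (fun w => ark z ≤ ark w) = e := by
      apply Finset.filter_eq_self.2
      intro w hw
      rw [he w hw]
      exact (hs z hz).le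
    have : (s ∪ e).filter (fun w => ark z ≤ ark w)
        = s.filter (fun w => ark z ≤ ark w) ∪ e := by
      rw [Finset.filter_union, hfe]
    rw [hg]
    simp only [this]
    rw [Finset.card_union_of_disjoint (Disjoint.mono_left (Finset.filter_subset _ _) hdis)]
    omega
  rw [hsup, hesup]
  rcases s.eq_empty_or_nonempty with rfl | hsne
  · simp [FF_empty]
  · have : s.sup g = FF s + e.card := by
      apply le_antisymm
      · apply Finset.sup_le
        intro z hz
        rw [hsg z hz]
        exact Nat.add_le_add_right (term_le_FF hz) _
      · obtain ⟨z, hz, hzeq⟩ := Finset.exists_mem_eq_sup s hsne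
          (fun y => ark y + (s.filter (fun w => ark y ≤ ark w)).card)
        have : FF s = ark z + (s.filter (fun w => ark z ≤ ark w)).card := hzeq
        rw [this, ← hsg z hz]
        exact Finset.le_sup hz
    rw [this]
    omega

/-! ### Universe finsets and transfer -/

def UA (j : ℕ) : Finset HFSet := (A_finite j).toFinset

lemma mem_UA {y : HFSet} {j : ℕ} : y ∈ UA j ↔ y ∈ A j := Set.Finite.mem_toFinset _

def UZ (j : ℤ) : Finset HFSet := if 0 ≤ j then UA j.toNat else ∅

lemma mem_UZ_iff_Az {j : ℤ} {y : HFSet} : y ∈ UZ j ↔ y ∈ Az j := by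
  unfold UZ Az
  split
  · rw [mem_UA]
  · simp

lemma UZ_coe (j : ℕ) : UZ (j : ℤ) = UA j := by
  unfold UZ
  rw [if_pos (Int.ofNat_nonneg j), Int.toNat_natCast]

def DF (m : ℤ) (nn : ℕ) (t : ℤ) : Finset (Finset HFSet) :=
  ((UZ m).powerset).filter (fun s => FF s = nn ∧ (s.card : ℤ) ≤ t)

lemma mem_DF {m t : ℤ} {nn : ℕ} {s : Finset HFSet} :
    s ∈ DF m nn t ↔ s ⊆ UZ m ∧ FF s = nn ∧ (s.card : ℤ) ≤ t := by
  unfold DF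
  rw [Finset.mem_filter, Finset.mem_powerset]

lemma hered_of_subset_UZ {m : ℤ} {s : Finset HFSet} (h : s ⊆ UZ m) :
    ∀ y ∈ s, ∃ j, y ∈ A j := by
  intro y hy
  have := h hy
  unfold UZ at this
  split at this
  · exact ⟨_, mem_UA.1 this⟩
  · exact absurd this (Finset.notMem_empty y)

lemma d_eq (nn : ℕ) (m t : ℤ) : d t nn m = (DF m nn t).card := by
  have himg : {x : HFSet | x ∈ Az nn ∧ x ∉ Az (nn - 1) ∧ (∀ y, y ∈ x → y ∈ Az m) ∧
      (x.toSet.ncard : ℤ) ≤ t} = ofFinset '' ↑(DF m nn t) := by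
    ext x
    simp only [Set.mem_setOf_eq, Set.mem_image, Finset.mem_coe]
    constructor
    · rintro ⟨h1, h2, h3, h4⟩
      have h1' : x ∈ A nn := by
        unfold Az at h1
        rwa [if_pos (Int.ofNat_nonneg nn), Int.toNat_natCast] at h1
      have hfin := toSet_finite_of_mem_A h1'
      refine ⟨hfin.toFinset, ?_, ofFinset_toFinset hfin⟩
      rw [mem_DF]
      have hsub : hfin.toFinset ⊆ UZ m := by
        intro y hy
        rw [Set.Finite.mem_toFinset, mem_toSet'] at hy
        exact mem_UZ_iff_Az.2 (h3 y hy)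
      have hcard : hfin.toFinset.card = x.toSet.ncard :=
        (Set.ncard_eq_toFinset_card _ hfin).symm
      refine ⟨hsub, ?_, by rw [hcard]; exact h4⟩
      have hle : FF hfin.toFinset ≤ nn := FF_le_of_mem_A h1'
      cases nn with
      | zero =>
          omega
      | succ j =>
          by_contra hne
          have hlt : FF hfin.toFinset ≤ j := by omega
          have : ofFinset hfin.toFinset ∈ A j :=
            mem_A_of_FF_le (hered_of_subset_UZ hsub) hlt
          rw [ofFinset_toFinset hfin] at this
          apply h2
          unfold Az
          have : x ∈ A ((↑(j+1) - 1 : ℤ)).toNat := by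
            have hn : ((↑(j+1) - 1 : ℤ)).toNat = j := by omega
            rwa [hn]
          rw [if_pos (by omega : (0:ℤ) ≤ ↑(j+1) - 1)]
          exact this
    · rintro ⟨s, hsDF, rfl⟩
      rw [mem_DF] at hsDF
      obtain ⟨hsub, hFF, hcard⟩ := hsDF
      have hher := hered_of_subset_UZ hsub
      have hmem : ofFinset s ∈ A nn := mem_A_of_FF_le hher hFF.le
      have hfin := ofFinset_finite s
      have hcards : (ofFinset s).toSet.ncard = s.card := by
        rw [Set.ncard_eq_toFinset_card _ hfin, toFinset_ofFinset]
      refine ⟨?_, ?_, ?_, by rw [hcards]; exact hcard⟩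
      · unfold Az
        rwa [if_pos (Int.ofNat_nonneg nn), Int.toNat_natCast]
      · cases nn with
        | zero =>
            unfold Az
            rw [if_neg (by omega : ¬ (0:ℤ) ≤ (0:ℕ) - 1)]
            simp
        | succ j =>
            intro hmem'
            unfold Az at hmem'
            rw [if_pos (by omega : (0:ℤ) ≤ ↑(j+1) - 1)] at hmem'
            have hn : ((↑(j+1) - 1 : ℤ)).toNat = j := by omega
            rw [hn] at hmem'
            have := FF_le_of_mem_A hmem'
            rw [toFinset_ofFinset] at this
            omega
      · intro y hy
        rw [mem_ofFinset] at hy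
        exact mem_UZ_iff_Az.1 (hsub hy)
  unfold d
  rw [himg, Set.ncard_image_of_injective _ ofFinset_injective, Set.ncard_coe_finset]








/-! ### further UZ facts -/

lemma UZ_mono {i j : ℤ} (h : i ≤ j) : UZ i ⊆ UZ j := by
  unfold UZ
  split
  · rw [if_pos (le_trans (by assumption) h)]
    intro y hy
    exact mem_UA.2 (A_mono (Int.toNat_le_toNat h) (mem_UA.1 hy))
  · intro y hy
    exact absurd hy (Finset.notMem_empty y)

lemma mem_UZ_pred {j : ℕ} (hj : 1 ≤ j) {y : HFSet} : y ∈ UZ ((j:ℤ)-1) ↔ y ∈ A (j-1) := by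
  unfold UZ
  rw [if_pos (by omega : (0:ℤ) ≤ (j:ℤ)-1)]
  have : ((j:ℤ)-1).toNat = j - 1 := by omega
  rw [this, mem_UA]

lemma UZ_pred_subset_UA (m : ℕ) : UZ ((m:ℤ)-1) ⊆ UA m := by
  rcases Nat.eq_zero_or_pos m with rfl | hm
  · unfold UZ
    rw [if_neg (by omega : ¬ (0:ℤ) ≤ (0:ℕ) - 1)]
    intro y hy; exact absurd hy (Finset.notMem_empty y)
  · intro y hy
    rw [mem_UZ_pred hm] at hy
    exact mem_UA.2 (A_mono (by omega : m - 1 ≤ m) hy)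

lemma ark_lt_of_mem_UZ_pred {m : ℕ} {y : HFSet} (hy : y ∈ UZ ((m:ℤ)-1)) : ark y < m := by
  rcases Nat.eq_zero_or_pos m with rfl | hm
  · unfold UZ at hy
    rw [if_neg (by omega : ¬ (0:ℤ) ≤ (0:ℕ) - 1)] at hy
    exact absurd hy (Finset.notMem_empty y)
  · rw [mem_UZ_pred hm] at hy
    have := ark_le hy
    omega

lemma ark_eq_of_mem_delta {m : ℕ} {y : HFSet} (hy : y ∈ UA m \ UZ ((m:ℤ)-1)) :
    ark y = m := by
  obtain ⟨hyU, hyU'⟩ := Finset.mem_sdiff.1 hy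
  have h1 : ark y ≤ m := ark_le (mem_UA.1 hyU)
  rcases Nat.eq_zero_or_pos m with rfl | hm
  · omega
  · by_contra hne
    have : ark y ≤ m - 1 := by omega
    have : y ∈ A (m-1) := mem_A_of_ark_le ⟨m, mem_UA.1 hyU⟩ this
    exact hyU' ((mem_UZ_pred hm).2 this)

lemma mem_UZ_pred_of_ark_lt {m : ℕ} {y : HFSet} (hy : ∃ j, y ∈ A j) (h : ark y < m) :
    y ∈ UZ ((m:ℤ)-1) := by
  have hm : 1 ≤ m := by omega
  exact (mem_UZ_pred hm).2 (mem_A_of_ark_le hy (by omega))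

/-! ### b = card Δ -/

lemma b_eq_card_delta (m : ℕ) : b m ((m:ℤ)-1) = (UA m \ UZ ((m:ℤ)-1)).card := by
  have hset : B m ((m:ℤ)-1) = ↑(UA m \ UZ ((m:ℤ)-1)) := by
    ext x
    simp only [B, Set.mem_setOf_eq, Finset.coe_sdiff, Set.mem_diff, Finset.mem_coe]
    constructor
    · rintro ⟨h1, h2, _⟩
      have h1' : x ∈ A m := by rwa [← mem_UZ_iff_Az, UZ_coe, mem_UA] at h1
      exact ⟨mem_UA.2 h1', fun hc => h2 (mem_UZ_iff_Az.1 hc)⟩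
    · rintro ⟨h1, h2⟩
      have h1' : x ∈ A m := mem_UA.1 h1
      refine ⟨by rwa [← mem_UZ_iff_Az, UZ_coe, mem_UA], fun hc => h2 (mem_UZ_iff_Az.2 hc), ?_⟩
      intro y hy
      rcases Nat.eq_zero_or_pos m with rfl | hm
      · simp only [A, Set.mem_singleton_iff] at h1'
        subst h1'
        exact absurd hy (ZFSet.notMem_empty y)
      · have : x ∈ A ((m-1)+1) := by
          have hmm : m - 1 + 1 = m := by omega
          rwa [hmm]
        have := mem_of_mem_A_succ this hy
        rw [← mem_UZ_iff_Az]
        exact (mem_UZ_pred hm).2 this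
  unfold b
  rw [hset, Set.ncard_coe_finset]


/-! ### The counting core -/

section Main

variable {n m t : ℕ}

lemma sdiff_delta_subset {s : Finset HFSet} (hs : s ⊆ UA m) :
    (s \ (UA m \ UZ ((m:ℤ)-1))) ⊆ UZ ((m:ℤ)-1) := by
  intro y hy
  obtain ⟨hys, hyn⟩ := Finset.mem_sdiff.1 hy
  by_contra hc
  exact hyn (Finset.mem_sdiff.2 ⟨hs hys, hc⟩)

lemma disj_UZpred_delta : Disjoint (UZ ((m:ℤ)-1)) (UA m \ UZ ((m:ℤ)-1)) :=
  Finset.disjoint_sdiff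

lemma FF_split {s : Finset HFSet} (hs : s ⊆ UA m)
    (hne : (s ∩ (UA m \ UZ ((m:ℤ)-1))).Nonempty) :
    FF s = max (m + (s ∩ (UA m \ UZ ((m:ℤ)-1))).card)
        (FF (s \ (UA m \ UZ ((m:ℤ)-1))) + (s ∩ (UA m \ UZ ((m:ℤ)-1))).card) := by
  have h1 : ∀ y ∈ s \ (UA m \ UZ ((m:ℤ)-1)), ark y < m :=
    fun y hy => ark_lt_of_mem_UZ_pred (sdiff_delta_subset hs hy)
  have h2 : ∀ y ∈ s ∩ (UA m \ UZ ((m:ℤ)-1)), ark y = m :=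
    fun y hy => ark_eq_of_mem_delta (Finset.mem_inter.1 hy).2
  have := FF_union h1 h2 hne
  rwa [Finset.sdiff_union_inter] at this

lemma fib_card {k : ℕ} (hk1 : 1 ≤ k) :
    ((DF (↑m) n ↑t).filter (fun s => (s ∩ (UA m \ UZ ((m:ℤ)-1))).card = k)).card
      = (((UZ ((m:ℤ)-1)).powerset).filter
          (fun s' => max (m + k) (FF s' + k) = n ∧ (s'.card : ℤ) ≤ (t:ℤ) - k)).card
        * Nat.choose (UA m \ UZ ((m:ℤ)-1)).card k := by
  set Δ := UA m \ UZ ((m:ℤ)-1) with hΔ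
  rw [← Finset.card_powersetCard, ← Finset.card_product]
  refine Finset.card_bij' (fun s _ => (s \ Δ, s ∩ Δ)) (fun p _ => p.1 ∪ p.2) ?_ ?_ ?_ ?_
  · -- forward maps into
    intro s hs
    rw [Finset.mem_filter, mem_DF, UZ_coe] at hs
    obtain ⟨⟨hsub, hFF, hcard⟩, hk⟩ := hs
    have hne : (s ∩ Δ).Nonempty := Finset.card_pos.1 (by omega)
    have hsplit := FF_split hsub hne
    rw [← hΔ] at hsplit
    rw [Finset.mem_product]
    constructor
    · rw [Finset.mem_filter, Finset.mem_powerset]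
      refine ⟨sdiff_delta_subset hsub, ?_, ?_⟩
      · show max (m + k) (FF (s \ Δ) + k) = n
        rw [hk] at hsplit
        omega
      · show ((s \ Δ).card : ℤ) ≤ (t:ℤ) - k
        have := Finset.card_sdiff_add_card_inter s Δ
        rw [hk] at this
        omega
    · exact Finset.mem_powersetCard.2 ⟨Finset.inter_subset_right, hk⟩
  · -- backward maps into
    rintro ⟨s', e⟩ hp
    dsimp only at hp ⊢
    rw [Finset.mem_product, Finset.mem_filter, Finset.mem_powerset,
      Finset.mem_powersetCard] at hp
    obtain ⟨⟨hs'sub, hmax, hs'card⟩, he, hek⟩ := hp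
    dsimp only at hs'sub hmax hs'card he hek
    have hdisj : Disjoint s' e :=
      (disj_UZpred_delta.mono hs'sub he)
    have hene : e.Nonempty := Finset.card_pos.1 (by omega)
    have hFFu : FF (s' ∪ e) = max (m + e.card) (FF s' + e.card) :=
      FF_union (fun y hy => ark_lt_of_mem_UZ_pred (hs'sub hy))
        (fun y hy => ark_eq_of_mem_delta (he hy)) hene
    have hinter : (s' ∪ e) ∩ Δ = e := by
      rw [Finset.union_inter_distrib_right]
      have h1 : s' ∩ Δ = ∅ := Finset.disjoint_iff_inter_eq_empty.1
        (disj_UZpred_delta.mono_left hs'sub)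
      have h2 : e ∩ Δ = e := Finset.inter_eq_left.2 he
      rw [h1, h2, Finset.empty_union]
    rw [Finset.mem_filter, mem_DF, UZ_coe]
    refine ⟨⟨?_, ?_, ?_⟩, by rw [hinter]; exact hek⟩
    · exact Finset.union_subset (le_trans hs'sub (UZ_pred_subset_UA m))
        (le_trans he Finset.sdiff_subset)
    · rw [hFFu, hek]
      exact hmax
    · rw [Finset.card_union_of_disjoint hdisj]
      omega
  · intro s _
    dsimp only
    exact Finset.sdiff_union_inter s Δ
  · rintro ⟨s', e⟩ hp
    dsimp only at hp ⊢
    rw [Finset.mem_product, Finset.mem_filter, Finset.mem_powerset,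
      Finset.mem_powersetCard] at hp
    obtain ⟨⟨hs'sub, _, _⟩, he, _⟩ := hp
    dsimp only at hs'sub he
    have h1 : s' ∩ Δ = ∅ := Finset.disjoint_iff_inter_eq_empty.1
      (disj_UZpred_delta.mono_left hs'sub)
    have h2 : e ∩ Δ = e := Finset.inter_eq_left.2 he
    have hfst : (s' ∪ e) \ Δ = s' := by
      rw [Finset.union_sdiff_distrib]
      have h3 : s' \ Δ = s' := by
        rw [Finset.sdiff_eq_self_iff_disjoint]
        exact disj_UZpred_delta.mono_left hs'sub
      have h4 : e \ Δ = ∅ := Finset.sdiff_eq_empty_iff_subset.2 he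
      rw [h3, h4, Finset.union_empty]
    have hsnd : (s' ∪ e) ∩ Δ = e := by
      rw [Finset.union_inter_distrib_right, h1, h2, Finset.empty_union]
    simp only [hfst, hsnd]

lemma fiber_zero :
    (DF (↑m) n ↑t).filter (fun s => (s ∩ (UA m \ UZ ((m:ℤ)-1))).card = 0)
      = DF ((m:ℤ)-1) n ↑t := by
  ext s
  rw [Finset.mem_filter, mem_DF, mem_DF, UZ_coe, Finset.card_eq_zero]
  constructor
  · rintro ⟨⟨hsub, hFF, hc⟩, h0⟩
    refine ⟨?_, hFF, hc⟩
    intro y hy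
    by_contra hc'
    have : y ∈ s ∩ (UA m \ UZ ((m:ℤ)-1)) :=
      Finset.mem_inter.2 ⟨hy, Finset.mem_sdiff.2 ⟨hsub hy, hc'⟩⟩
    rw [h0] at this
    exact absurd this (Finset.notMem_empty y)
  · rintro ⟨hsub, hFF, hc⟩
    refine ⟨⟨le_trans hsub (UZ_pred_subset_UA m), hFF, hc⟩, ?_⟩
    exact Finset.disjoint_iff_inter_eq_empty.1 (disj_UZpred_delta.mono_left hsub)

lemma fiber_mid (hmn : m < n) {k : ℕ} (hk1 : 1 ≤ k) (hk2 : k ≤ n - m - 1) :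
    ((UZ ((m:ℤ)-1)).powerset).filter
        (fun s' => max (m + k) (FF s' + k) = n ∧ (s'.card : ℤ) ≤ (t:ℤ) - k)
      = DF ((m:ℤ)-1) (n - k) ((t:ℤ) - k) := by
  ext s'
  rw [Finset.mem_filter, mem_DF, Finset.mem_powerset]
  have hmk : m + k < n := by omega
  constructor
  · rintro ⟨hsub, hmax, hc⟩
    refine ⟨hsub, ?_, hc⟩
    rcases max_choice (m + k) (FF s' + k) with h' | h' <;> rw [h'] at hmax <;> omega
  · rintro ⟨hsub, hFF, hc⟩
    refine ⟨hsub, ?_, hc⟩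
    have h1 : FF s' + k = n := by omega
    rw [h1]
    exact max_eq_right (by omega)

lemma fiber_top (hmn : m < n) :
    ((UZ ((m:ℤ)-1)).powerset).filter
        (fun s' => max (m + (n-m)) (FF s' + (n-m)) = n ∧ (s'.card : ℤ) ≤ (t:ℤ) - (n-m : ℕ))
      = ((UZ ((m:ℤ)-1)).powerset).filter
        (fun s' => FF s' ≤ m ∧ (s'.card : ℤ) ≤ (t:ℤ) - (n-m : ℕ)) := by
  apply Finset.filter_congr
  intro s' _
  have hmK : m + (n - m) = n := by omega
  constructor
  · rintro ⟨hmax, hc⟩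
    refine ⟨?_, hc⟩
    have h2 := le_max_right (m + (n-m)) (FF s' + (n-m))
    rw [hmax] at h2
    omega
  · rintro ⟨hFF, hc⟩
    refine ⟨?_, hc⟩
    rw [max_eq_left (Nat.add_le_add_right hFF _)]
    omega

lemma G_card (tt : ℤ) :
    (((UZ ((m:ℤ)-1)).powerset).filter (fun s' => FF s' ≤ m ∧ (s'.card : ℤ) ≤ tt)).card
      = ∑ j ∈ Finset.range (m+1), (DF ((j:ℤ)-1) j tt).card := by
  rw [Finset.card_eq_sum_card_fiberwise
    (f := FF) (t := Finset.range (m+1))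
    (fun s' hs' => by
      rw [Finset.mem_coe, Finset.mem_filter] at hs'
      rw [Finset.mem_coe, Finset.mem_range]
      omega)]
  apply Finset.sum_congr rfl
  intro j hj
  rw [Finset.mem_range] at hj
  congr 1
  ext s'
  rw [Finset.mem_filter, Finset.mem_filter, Finset.mem_powerset, mem_DF]
  constructor
  · rintro ⟨⟨hsub, _, hc⟩, hFF⟩
    refine ⟨?_, hFF, hc⟩
    intro y hy
    have hark : ark y + 1 ≤ j := by
      have := FF_pos_of_mem hy
      omega
    exact mem_UZ_pred_of_ark_lt (hered_of_subset_UZ hsub y hy) (by omega)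
  · rintro ⟨hsub, hFF, hc⟩
    exact ⟨⟨le_trans hsub (UZ_mono (by omega)), by omega, hc⟩, hFF⟩


lemma main_count (hmn : m < n) :
    (DF (↑m) n ↑t).card
      = (DF ((m:ℤ)-1) n ↑t).card
        + (∑ k ∈ Finset.Icc 1 (n - m - 1),
            (DF ((m:ℤ)-1) (n-k) ((t:ℤ)-k)).card
              * Nat.choose (UA m \ UZ ((m:ℤ)-1)).card k)
        + Nat.choose (UA m \ UZ ((m:ℤ)-1)).card (n-m)
          * ∑ j ∈ Finset.range (m+1),
              (DF ((j:ℤ)-1) j ((t:ℤ) - ((n - m : ℕ) : ℤ))).card := by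
  have hK1 : 1 ≤ n - m := by omega
  have hstep : (DF (↑m) n ↑t).card
      = ∑ k ∈ Finset.range ((n-m)+1),
          ((DF (↑m) n ↑t).filter
            (fun s => (s ∩ (UA m \ UZ ((m:ℤ)-1))).card = k)).card := by
    apply Finset.card_eq_sum_card_fiberwise
    intro s hs
    rw [Finset.mem_coe, mem_DF, UZ_coe] at hs
    obtain ⟨hsub, hFF, _⟩ := hs
    rw [Finset.mem_coe, Finset.mem_range]
    beta_reduce
    rcases (s ∩ (UA m \ UZ ((m:ℤ)-1))).eq_empty_or_nonempty with he | hne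
    · rw [he]
      simp only [Finset.card_empty]
      omega
    · have hsplit := FF_split hsub hne
      have h1 := le_max_left (m + (s ∩ (UA m \ UZ ((m:ℤ)-1))).card)
        (FF (s \ (UA m \ UZ ((m:ℤ)-1))) + (s ∩ (UA m \ UZ ((m:ℤ)-1))).card)
      rw [← hsplit, hFF] at h1
      omega
  rw [Finset.sum_range_succ] at hstep
  have hrng : Finset.range (n-m) = insert 0 (Finset.Icc 1 (n-m-1)) := by
    ext j
    simp only [Finset.mem_range, Finset.mem_insert, Finset.mem_Icc]
    omega
  rw [hrng, Finset.sum_insert (by simp)] at hstep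
  rw [hstep, fiber_zero]
  congr 1
  · congr 1
    apply Finset.sum_congr rfl
    intro k hk
    rw [Finset.mem_Icc] at hk
    rw [fib_card hk.1, fiber_mid hmn hk.1 hk.2]
  · rw [fib_card hK1, fiber_top hmn, G_card]
    exact Nat.mul_comm _ _

end Main

theorem stmt15' (n m t : ℕ) (hmn : m < n) (ht : t ≤ n) :
    d t n m = d t n ((m : ℤ) - 1)
      + (∑ k ∈ Finset.Icc 1 (n - m - 1),
          d ((t : ℤ) - k) ((n : ℤ) - k) ((m : ℤ) - 1) * Nat.choose (b m ((m : ℤ) - 1)) k)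
      + Nat.choose (b m ((m : ℤ) - 1)) (n - m)
        * ∑ k ∈ Finset.range (m + 1), d ((t : ℤ) - n + m) k ((k : ℤ) - 1) := by
  have hsum1 : ∑ k ∈ Finset.Icc 1 (n - m - 1),
      d ((t : ℤ) - k) ((n : ℤ) - k) ((m : ℤ) - 1) * Nat.choose (b m ((m : ℤ) - 1)) k
      = ∑ k ∈ Finset.Icc 1 (n - m - 1),
        (DF ((m:ℤ)-1) (n-k) ((t:ℤ)-k)).card
          * Nat.choose (UA m \ UZ ((m:ℤ)-1)).card k := by
    apply Finset.sum_congr rfl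
    intro k hk
    rw [Finset.mem_Icc] at hk
    have h1 : ((n:ℤ) - k) = ((n - k : ℕ) : ℤ) := by omega
    rw [h1, d_eq (n-k) ((m:ℤ)-1) ((t:ℤ)-k), b_eq_card_delta m]
  have hsum2 : ∑ k ∈ Finset.range (m + 1), d ((t : ℤ) - n + m) k ((k : ℤ) - 1)
      = ∑ k ∈ Finset.range (m + 1),
        (DF ((k:ℤ)-1) k ((t:ℤ) - ((n - m : ℕ) : ℤ))).card := by
    apply Finset.sum_congr rfl
    intro k hk
    have h1 : ((t : ℤ) - n + m) = (t:ℤ) - ((n - m : ℕ) : ℤ) := by omega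
    rw [h1, d_eq k ((k:ℤ)-1) _]
  rw [d_eq n (↑m) ↑t, d_eq n ((m:ℤ)-1) ↑t, hsum1, hsum2, b_eq_card_delta m]
  exact main_count hmn


end S15

theorem stmt15 (n m t : ℕ) (hmn : m < n) (ht : t ≤ n) :
    d t n m = d t n ((m : ℤ) - 1)
      + (∑ k ∈ Finset.Icc 1 (n - m - 1),
          d ((t : ℤ) - k) ((n : ℤ) - k) ((m : ℤ) - 1) * Nat.choose (b m ((m : ℤ) - 1)) k)
      + Nat.choose (b m ((m : ℤ) - 1)) (n - m)
        * ∑ k ∈ Finset.range (m + 1), d ((t : ℤ) - n + m) k ((k : ℤ) - 1) := by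
  exact S15.stmt15' n m t hmn ht
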